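/- arXiv:1211.5748 — 2 statements merged into one kernel-verified Lean document; each statement's English description precedes it below -/
import Mathlib

section
/- Let R be a Noetherian commutative ring and M a nonzero R-module. Then M is weakly Laskerian if and only if M is an FSF module, i.e. there exists a finitely generated submodule N of M such that the support Supp_R(M/N) is a finite set. -/
open CategoryTheory Opposite

noncomputable section

/-- `dim M ≤ n` for an integer `n ≥ -1` (with `n = -1` meaning the support is empty,
i.e. `M = 0`): the Krull dimension of the support of `M` is at most `n`. -/
def Module.supportDimLE (R : Type) [CommRing R] (M : Type) [AddCommGroup M] [Module R M]
    (n : ℤ) : Prop :=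
  Order.krullDim (Module.support R M) ≤
    if n < 0 then (⊥ : WithBot ℕ∞) else ((n.toNat : ℕ∞) : WithBot ℕ∞)

/-- `M` is an `FD_{≤ n}` module: there is a finitely generated submodule `N` of `M`
with `dim M/N ≤ n`. -/
def Module.IsFD (R : Type) [CommRing R] (M : Type) [AddCommGroup M] [Module R M]
    (n : ℤ) : Prop :=
  ∃ N : Submodule R M, N.FG ∧ Module.supportDimLE R (M ⧸ N) n

/-- `M` is `I`-cofinite: `Supp M ⊆ V(I)` and `Ext^i_R(R/I, M)` is a finitely generated
`R`-module for all `i ≥ 0`. -/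
def Ideal.IsCofinite {R : Type} [CommRing R] (I : Ideal R) (M : Type) [AddCommGroup M]
    [Module R M] : Prop :=
  Module.support R M ⊆ PrimeSpectrum.zeroLocus (I : Set R) ∧
    ∀ i : ℕ, Module.Finite R
      (((Ext R (ModuleCat R) i).obj (op (ModuleCat.of R (R ⧸ I)))).obj (ModuleCat.of R M))

namespace WLFSF

open Submodule

variable {R : Type*} [CommRing R] {M : Type*} [AddCommGroup M] [Module R M]

theorem isAP' [IsNoetherianRing R] {p : Ideal R} {X : Type*} [AddCommGroup X] [Module R X] :
    IsAssociatedPrime p X ↔ p.IsPrime ∧ ∃ x : X, p = (span R {x}).annihilator := by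
  rw [_root_.isAssociatedPrime_iff]
  have h : ∀ x : X, Submodule.colon (⊥ : Submodule R X) {x} = (span R {x}).annihilator := by
    intro x
    ext r
    rw [Submodule.mem_colon_singleton, Submodule.mem_bot,
      Submodule.mem_annihilator_span_singleton]
  simp only [h]



/-- Socle lemma: if `x` is not killed by anything outside `p`, but `p ^ k • x` is
"torsion at p", then some multiple `c • x` is killed exactly by `p`. -/
theorem exists_socle_elt (p : Ideal R) (hp : p.IsPrime) (hfg : p.FG) :
    ∀ (k : ℕ) (x : M), (∀ t ∉ p, t • x ≠ 0) → (∀ a ∈ p ^ k, ∃ t ∉ p, t • a • x = 0) →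
      ∃ c : R, (∀ t ∉ p, t • c • x ≠ 0) ∧ ∀ a ∈ p, a • c • x = 0 := by
  intro k
  induction k with
  | zero =>
    intro x hx h
    obtain ⟨t, ht, h0⟩ := h 1 (by simp [Ideal.one_eq_top])
    exact absurd (by simpa using h0) (hx t ht)
  | succ k ih =>
    intro x hx h
    by_cases hcase : ∀ a ∈ p ^ k, ∃ t ∉ p, t • a • x = 0
    · exact ih x hx hcase
    · push_neg at hcase
      obtain ⟨b, hb, hbU⟩ := hcase
      -- hbU : ∀ t, t ∉ p → t • b • x ≠ 0
      obtain ⟨s, hs⟩ := hfg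
      have hgen : ∀ g ∈ (s : Set R), ∃ t, t ∉ p ∧ t • (g * b) • x = 0 := by
        intro g hg
        have hgb : g * b ∈ p ^ (k + 1) := by
          rw [pow_succ']
          exact Ideal.mul_mem_mul (hs ▸ Ideal.subset_span hg) hb
        obtain ⟨t, ht, h0⟩ := h _ hgb
        exact ⟨t, ht, h0⟩
      classical
      let F : R → R := fun g => if hg : ∃ t, t ∉ p ∧ t • (g * b) • x = 0 then hg.choose else 1
      have hF : ∀ g ∈ (s : Set R), F g ∉ p ∧ F g • (g * b) • x = 0 := by
        intro g hg
        have hgg := hgen g hg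
        simp only [F, dif_pos hgg]
        exact ⟨hgg.choose_spec.1, hgg.choose_spec.2⟩
      set T : R := ∏ g ∈ s, F g with hT
      have hTp : T ∉ p := by
        refine Finset.prod_induction F (· ∉ p) (fun a b ha hb hab => ?_)
          (fun h1 => hp.ne_top (Ideal.eq_top_of_isUnit_mem _ h1 isUnit_one))
          (fun g hg => (hF g hg).1)
        rcases hp.mem_or_mem hab with h | h
        exacts [ha h, hb h]
      refine ⟨T * b, fun t ht h0 => hbU (t * T) (fun htT => ?_) ?_, ?_⟩
      · rcases hp.mem_or_mem htT with h | h
        exacts [ht h, hTp h]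
      · rw [← h0, smul_smul, smul_smul, mul_assoc]
      · intro a ha
        rw [← hs] at ha
        induction ha using Submodule.span_induction with
        | mem g hg =>
          have h0 := (hF g hg).2
          rw [smul_smul] at h0 ⊢
          rw [show g * (T * b) = (∏ h ∈ s.erase g, F h) * (F g * (g * b)) by
            rw [hT, ← Finset.mul_prod_erase s F hg]; ring, mul_smul, h0, smul_zero]
        | zero => rw [zero_smul]
        | add u v _ _ hu hv => rw [add_smul, hu, hv, add_zero]
        | smul r u _ hu => rw [smul_eq_mul, mul_smul, hu, smul_zero]




/-- If `p` is a minimal prime over `I` and `p` is f.g. (e.g. `R` Noetherian), then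
`s * p ^ k ⊆ I` for some `s ∉ p`. -/
theorem exists_smul_pow_le (I p : Ideal R) (hfg : p.FG) (hmin : p ∈ I.minimalPrimes) :
    ∃ s ∉ p, ∃ k : ℕ, ∀ a ∈ p ^ k, s * a ∈ I := by
  have hp : p.IsPrime := hmin.1.1
  have hIp : I ≤ p := hmin.1.2
  classical
  set Isat : Ideal R :=
    { carrier := {a | ∃ t ∉ p, t * a ∈ I}
      add_mem' := by
        rintro a b ⟨t, ht, hta⟩ ⟨u, hu, hub⟩
        refine ⟨t * u, fun htu => ?_, ?_⟩
        · rcases hp.mem_or_mem htu with h | h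
          exacts [ht h, hu h]
        · have : t * u * (a + b) = u * (t * a) + t * (u * b) := by ring
          rw [this]
          exact I.add_mem (I.mul_mem_left _ hta) (I.mul_mem_left _ hub)
      zero_mem' := ⟨1, fun h1 => hp.ne_top (Ideal.eq_top_of_isUnit_mem _ h1 isUnit_one),
        by rw [mul_zero]; exact I.zero_mem⟩
      smul_mem' := by
        rintro r a ⟨t, ht, hta⟩
        refine ⟨t, ht, ?_⟩
        have : t * (r • a) = r * (t * a) := by simp [smul_eq_mul]; ring
        rw [this]
        exact I.mul_mem_left _ hta } with hIsat
  have hmem : ∀ a : R, a ∈ Isat ↔ ∃ t ∉ p, t * a ∈ I := fun a => Iff.rfl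
  have hrad : p ≤ Isat.radical := by
    intro a ha
    by_contra hanot
    rw [Ideal.mem_radical_iff] at hanot
    push_neg at hanot
    set S : Submonoid R :=
      { carrier := {x | ∃ m : ℕ, ∃ t ∉ p, x = a ^ m * t}
        one_mem' := ⟨0, 1, fun h1 => hp.ne_top (Ideal.eq_top_of_isUnit_mem _ h1 isUnit_one),
          by ring⟩
        mul_mem' := by
          rintro x y ⟨m, t, ht, rfl⟩ ⟨m', t', ht', rfl⟩
          refine ⟨m + m', t * t', fun htt => ?_, by ring⟩
          rcases hp.mem_or_mem htt with h | h
          exacts [ht h, ht' h] } with hS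
    have hdisj : Disjoint (I : Set R) (S : Set R) := by
      rw [Set.disjoint_left]
      rintro x hxI ⟨m, t, ht, rfl⟩
      exact hanot m ⟨t, ht, by rwa [show t * a ^ m = a ^ m * t by ring]⟩
    obtain ⟨q, hq, hIq, hqS⟩ := Ideal.exists_le_prime_disjoint I S hdisj
    have hqp : q ≤ p := by
      intro x hxq
      by_contra hxp
      exact (Set.disjoint_left.mp hqS) hxq ⟨0, x, hxp, by ring⟩
    have haq : a ∉ q := fun haq =>
      (Set.disjoint_left.mp hqS) haq ⟨1, 1, fun h1 => hp.ne_top (Ideal.eq_top_of_isUnit_mem _ h1 isUnit_one), by ring⟩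
    have := hmin.2 ⟨hq, hIq⟩ hqp
    exact haq (this ha)
  obtain ⟨k, hk⟩ := Ideal.exists_pow_le_of_le_radical_of_fg hrad hfg
  have hpkfg : (p ^ k).FG := Submodule.FG.pow hfg k
  obtain ⟨u, hu⟩ := hpkfg
  have hgen : ∀ g ∈ (u : Set R), ∃ t ∉ p, t * g ∈ I := fun g hg =>
    hk (hu ▸ Ideal.subset_span hg)
  let F : R → R := fun g => if hg : ∃ t ∉ p, t * g ∈ I then hg.choose else 1
  have hF : ∀ g ∈ (u : Set R), F g ∉ p ∧ F g * g ∈ I := by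
    intro g hg
    have hgg := hgen g hg
    simp only [F, dif_pos hgg]
    exact ⟨hgg.choose_spec.1, hgg.choose_spec.2⟩
  refine ⟨∏ g ∈ u, F g, ?_, k, ?_⟩
  · refine Finset.prod_induction F (· ∉ p) (fun a b ha hb hab => ?_)
      (fun h1 => hp.ne_top (Ideal.eq_top_of_isUnit_mem _ h1 isUnit_one))
      (fun g hg => (hF g hg).1)
    rcases hp.mem_or_mem hab with h | h
    exacts [ha h, hb h]
  · intro a ha
    rw [← hu] at ha
    induction ha using Submodule.span_induction with
    | mem g hg =>
      rw [show (∏ g ∈ u, F g) * g = (∏ h ∈ u.erase g, F h) * (F g * g) by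
        rw [← Finset.mul_prod_erase u F hg]; ring]
      exact I.mul_mem_left _ (hF g hg).2
    | zero => rw [mul_zero]; exact I.zero_mem
    | add x y _ _ hx hy => rw [mul_add]; exact I.add_mem hx hy
    | smul r x _ hx =>
      rw [smul_eq_mul, show (∏ g ∈ u, F g) * (r * x) = r * ((∏ g ∈ u, F g) * x) by ring]
      exact I.mul_mem_left _ hx




theorem isAssociatedPrime_sub_or_quot [IsNoetherianRing R] {p : Ideal R} (A : Submodule R M)
    (hp : IsAssociatedPrime p M) :
    IsAssociatedPrime p A ∨ IsAssociatedPrime p (M ⧸ A) := by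
  obtain ⟨hprime, x, hx⟩ := isAP'.mp hp
  have hxmem : ∀ r : R, r • x = 0 ↔ r ∈ p := by
    intro r
    rw [hx, Submodule.mem_annihilator_span_singleton]
  by_cases h : ∃ r : R, r • x ∈ A ∧ r • x ≠ 0
  · obtain ⟨r, hrA, hr0⟩ := h
    have hrp : r ∉ p := fun hr => hr0 ((hxmem r).mpr hr)
    left
    refine isAP'.mpr ⟨hprime, ⟨r • x, hrA⟩, ?_⟩
    ext s
    rw [Submodule.mem_annihilator_span_singleton]
    constructor
    · intro hs
      refine Subtype.ext ?_
      show s • (r • x) = 0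
      rw [smul_smul]
      exact (hxmem _).mpr (p.mul_mem_right r hs)
    · intro hs
      have h0 : (s * r) • x = 0 := by
        rw [mul_smul]
        exact congrArg Subtype.val hs
      rcases hprime.mem_or_mem ((hxmem _).mp h0) with h' | h'
      exacts [h', absurd h' hrp]
  · push_neg at h
    right
    refine isAP'.mpr ⟨hprime, Submodule.Quotient.mk x, ?_⟩
    ext s
    rw [Submodule.mem_annihilator_span_singleton, ← Submodule.Quotient.mk_smul,
      Submodule.Quotient.mk_eq_zero]
    constructor
    · intro hs
      rw [(hxmem s).mpr hs]
      exact A.zero_mem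
    · intro hsA
      exact (hxmem s).mp (h s hsA)




/-- A minimal prime over the annihilator of an element is an associated prime. -/
theorem isAssociatedPrime_of_mem_minimalPrimes [IsNoetherianRing R] {p : Ideal R} (x : M)
    (hmin : p ∈ ((span R {x}).annihilator).minimalPrimes) :
    IsAssociatedPrime p M := by
  have hp : p.IsPrime := hmin.1.1
  have hJp : (span R {x}).annihilator ≤ p := hmin.1.2
  have hfg : p.FG := IsNoetherian.noetherian p
  obtain ⟨s, hsp, k, hk⟩ := exists_smul_pow_le _ p hfg hmin
  have hx' : ∀ t ∉ p, t • s • x ≠ 0 := by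
    intro t ht h0
    rw [smul_smul] at h0
    have : t * s ∈ p := hJp ((Submodule.mem_annihilator_span_singleton x (t * s)).mpr h0)
    rcases hp.mem_or_mem this with h | h
    exacts [ht h, hsp h]
  have hk' : ∀ a ∈ p ^ k, ∃ t ∉ p, t • a • s • x = 0 := by
    intro a ha
    refine ⟨1, fun h1 => hp.ne_top (Ideal.eq_top_of_isUnit_mem _ h1 isUnit_one), ?_⟩
    have h0 : (s * a) • x = 0 :=
      (Submodule.mem_annihilator_span_singleton x (s * a)).mp (hk a ha)
    rw [one_smul, smul_smul, show a * s = s * a by ring, h0]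
  obtain ⟨c, hc1, hc2⟩ := exists_socle_elt p hp hfg k (s • x) hx' hk'
  refine isAP'.mpr ⟨hp, c • s • x, ?_⟩
  ext r
  rw [Submodule.mem_annihilator_span_singleton]
  exact ⟨fun hr => hc2 r hr, fun h0 => by_contra fun hrp => hc1 r hrp h0⟩


theorem exists_isAssociatedPrime_le [IsNoetherianRing R] (N : Submodule R M) {q : Ideal R}
    (hq : q.IsPrime) {x : M} (hx : ∀ r : R, r • x ∈ N → r ∈ q) :
    ∃ p', IsAssociatedPrime p' (M ⧸ N) ∧ p' ≤ q := by
  haveI := hq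
  have hle : (span R {(Submodule.Quotient.mk x : M ⧸ N)}).annihilator ≤ q := by
    intro r hr
    rw [Submodule.mem_annihilator_span_singleton, ← Submodule.Quotient.mk_smul,
      Submodule.Quotient.mk_eq_zero] at hr
    exact hx r hr
  obtain ⟨p', hp', hp'q⟩ := Ideal.exists_minimalPrimes_le hle
  exact ⟨p', isAssociatedPrime_of_mem_minimalPrimes _ hp', hp'q⟩

theorem mem_support_quotient_iff (N : Submodule R M) (q : PrimeSpectrum R) :
    q ∈ Module.support R (M ⧸ N) ↔ ∃ x : M, ∀ r : R, r • x ∈ N → r ∈ q.asIdeal := by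
  rw [Module.mem_support_iff']
  constructor
  · rintro ⟨m, hm⟩
    obtain ⟨x, rfl⟩ := Submodule.Quotient.mk_surjective N m
    refine ⟨x, fun r hr => by_contra fun hrq => hm r hrq ?_⟩
    rw [← Submodule.Quotient.mk_smul, Submodule.Quotient.mk_eq_zero]
    exact hr
  · rintro ⟨x, hx⟩
    refine ⟨Submodule.Quotient.mk x, fun r hr h0 => hr (hx r ?_)⟩
    rwa [← Submodule.Quotient.mk_smul, Submodule.Quotient.mk_eq_zero] at h0

theorem finite_associatedPrimes_quotient [IsNoetherianRing R] [IsNoetherian R M]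
    (N : Submodule R M) : (associatedPrimes R (M ⧸ N)).Finite := by
  refine IsNoetherian.induction
    (P := fun N : Submodule R M => (associatedPrimes R (M ⧸ N)).Finite) (fun N ih => ?_) N
  by_cases hN : N = ⊤
  · subst hN
    haveI : Subsingleton (M ⧸ (⊤ : Submodule R M)) :=
      Submodule.Quotient.subsingleton_iff.mpr rfl
    rw [associatedPrimes.eq_empty_of_subsingleton]
    exact Set.finite_empty
  · haveI : Nontrivial (M ⧸ N) :=
      Submodule.Quotient.nontrivial_iff.mpr hN
    obtain ⟨p, hp0⟩ := associatedPrimes.nonempty R (M ⧸ N)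
    obtain ⟨hprime, xbar, hx⟩ := isAP'.mp hp0
    obtain ⟨x, rfl⟩ := Submodule.Quotient.mk_surjective N xbar
    set N' := N ⊔ span R {x} with hN'def
    have hxN : x ∉ N := by
      intro hxN
      apply hprime.ne_top
      rw [hx, eq_top_iff]
      intro r _
      rw [Submodule.mem_annihilator_span_singleton,
        (Submodule.Quotient.mk_eq_zero N).mpr hxN, smul_zero]
    have hNlt : N < N' :=
      lt_of_le_of_ne le_sup_left fun h => hxN (by
        rw [h]; exact (le_sup_right : span R {x} ≤ N') (Submodule.mem_span_singleton_self x))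
    have hAeq : N'.map N.mkQ = span R {(Submodule.Quotient.mk x : M ⧸ N)} := by
      rw [hN'def, Submodule.map_sup, Submodule.mkQ_map_self, Submodule.map_span,
        bot_sup_eq, Set.image_singleton]
      rfl
    have key : ∀ q ∈ associatedPrimes R (M ⧸ N), q = p ∨ q ∈ associatedPrimes R (M ⧸ N') := by
      intro q hq
      rcases isAssociatedPrime_sub_or_quot (N'.map N.mkQ) hq with h | h
      · left
        have hker : LinearMap.ker
            (LinearMap.toSpanSingleton R (M ⧸ N) (Submodule.Quotient.mk x)) = p := by
          ext r
          rw [LinearMap.mem_ker, LinearMap.toSpanSingleton_apply,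
            ← Submodule.mem_annihilator_span_singleton, ← hx]
        have hrange : N'.map N.mkQ = LinearMap.range
            (LinearMap.toSpanSingleton R (M ⧸ N) (Submodule.Quotient.mk x)) := by
          rw [hAeq, LinearMap.span_singleton_eq_range]
        rw [hrange] at h
        have e1 := (LinearMap.toSpanSingleton R (M ⧸ N)
          (Submodule.Quotient.mk x)).quotKerEquivRange
        rw [hker] at e1
        have h2 : IsAssociatedPrime q (R ⧸ p) :=
          h.map_of_injective e1.symm.toLinearMap e1.symm.injective
        have h3 := associatedPrimes.eq_singleton_of_isPrimary hprime.isPrimary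
        have : q ∈ ({p.radical} : Set (Ideal R)) := h3 ▸ h2
        rwa [hprime.radical, Set.mem_singleton_iff] at this
      · right
        exact h.map_of_injective
          (Submodule.quotientQuotientEquivQuotient N N' le_sup_left).toLinearMap
          (Submodule.quotientQuotientEquivQuotient N N' le_sup_left).injective
    exact ((ih N' hNlt).insert p).subset fun q hq => (key q hq).imp id id |>.elim
      (fun h => Set.mem_insert_iff.mpr (Or.inl h)) fun h => Set.mem_insert_iff.mpr (Or.inr h)

theorem finite_associatedPrimes_of_fg [IsNoetherianRing R] {X : Type*} [AddCommGroup X]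
    [Module R X] [Module.Finite R X] : (associatedPrimes R X).Finite := by
  haveI : IsNoetherian R X := isNoetherian_of_isNoetherianRing_of_finite R X
  have h := finite_associatedPrimes_quotient (R := R) (M := X) ⊥
  have e : (X ⧸ (⊥ : Submodule R X)) ≃ₗ[R] X := Submodule.quotEquivOfEqBot _ rfl
  rw [← LinearEquiv.AssociatedPrimes.eq e]
  exact h


theorem le_of_sInf_le_prime {s : Set (Ideal R)} (hs : s.Finite) {q : Ideal R} (hq : q.IsPrime)
    (hle : sInf s ≤ q) : ∃ p' ∈ s, p' ≤ q := by
  have h1 : hs.toFinset.inf id ≤ q := by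
    rwa [Finset.inf_id_eq_sInf, hs.coe_toFinset]
  obtain ⟨p', hp's, hp'q⟩ := (Ideal.IsPrime.inf_le' hq).mp h1
  exact ⟨p', hs.mem_toFinset.mp hp's, hp'q⟩

theorem iSup_fin_succ {α : Type*} [CompleteLattice α] {n : ℕ} (g : Fin (n + 1) → α) :
    (⨆ i, g i) = (⨆ i : Fin n, g i.castSucc) ⊔ g (Fin.last n) := by
  apply le_antisymm
  · refine iSup_le fun i => ?_
    induction i using Fin.lastCases with
    | last => exact le_sup_right
    | cast j => exact le_sup_of_le_left (le_iSup (fun i : Fin n => g i.castSucc) j)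
  · exact sup_le (iSup_le fun j => le_iSup g j.castSucc) (le_iSup g (Fin.last n))

theorem fg_smul_span_singleton (I : Ideal R) (hI : I.FG) (y : M) :
    (I • (span R {y} : Submodule R M)).FG := by
  obtain ⟨s, hs⟩ := hI
  rw [← hs, Submodule.span_smul_span]
  exact Submodule.fg_span (Set.Finite.smul s.finite_toSet (Set.finite_singleton y))


/-- FSF implies weakly Laskerian. -/
theorem wl_of_fsf [IsNoetherianRing R] (N : Submodule R M) (hNfg : N.FG)
    (hfin : (Module.support R (M ⧸ N)).Finite) (K : Submodule R M) :
    (associatedPrimes R (M ⧸ K)).Finite := by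
  have hAfg : (N.map K.mkQ).FG := hNfg.map K.mkQ
  haveI : Module.Finite R (N.map K.mkQ) := Module.Finite.iff_fg.mpr hAfg
  have hAeq : (K ⊔ N).map K.mkQ = N.map K.mkQ := by
    rw [Submodule.map_sup, Submodule.mkQ_map_self, bot_sup_eq]
  have e := Submodule.quotientQuotientEquivQuotient K (K ⊔ N) le_sup_left
  rw [hAeq] at e
  have hsub : ∀ q, IsAssociatedPrime q (M ⧸ (K ⊔ N)) →
      q ∈ PrimeSpectrum.asIdeal '' Module.support R (M ⧸ N) := by
    intro q hq
    obtain ⟨hqp, xbar, hxq⟩ := isAP'.mp hq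
    obtain ⟨x, rfl⟩ := Submodule.Quotient.mk_surjective _ xbar
    refine ⟨⟨q, hqp⟩, ?_, rfl⟩
    rw [mem_support_quotient_iff]
    refine ⟨x, fun r hr => ?_⟩
    show r ∈ q
    rw [hxq, Submodule.mem_annihilator_span_singleton, ← Submodule.Quotient.mk_smul,
      Submodule.Quotient.mk_eq_zero]
    exact Submodule.mem_sup_right hr
  have hkey : associatedPrimes R (M ⧸ K) ⊆
      associatedPrimes R (N.map K.mkQ) ∪ PrimeSpectrum.asIdeal '' Module.support R (M ⧸ N) := by
    intro q hq
    rcases isAssociatedPrime_sub_or_quot (N.map K.mkQ) hq with h | h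
    · exact Or.inl h
    · exact Or.inr (hsub q (h.map_of_injective e.toLinearMap e.injective))
  exact (Set.Finite.union finite_associatedPrimes_of_fg (hfin.image _)).subset hkey

/-- The submodule generated by `N0` and the staged data. -/
def LfD (N0 : Submodule R M) {n : ℕ} (f : Fin n → M × Ideal R) : Submodule R M :=
  N0 ⊔ ⨆ i, (f i).2 • (span R {(f i).1})

/-- Invariant of the staged construction. -/
def PD (N0 : Submodule R M) (p : Ideal R) (n : ℕ) (f : Fin n → M × Ideal R) : Prop :=
  (LfD N0 f).FG ∧ (∀ i, (f i).2.IsPrime) ∧ (∀ i, p < (f i).2) ∧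
    (Function.Injective fun i => (f i).2) ∧
    (∀ i, ∀ r : R, r • (f i).1 ∈ LfD N0 f ↔ r ∈ (f i).2)

theorem LfD_snoc (N0 : Submodule R M) {n : ℕ} (f : Fin n → M × Ideal R) (z : M × Ideal R) :
    LfD N0 (Fin.snoc f z) = LfD N0 f ⊔ z.2 • (span R {z.1}) := by
  unfold LfD
  rw [iSup_fin_succ]
  simp only [Fin.snoc_castSucc, Fin.snoc_last]
  rw [sup_assoc]

theorem LfD_zero (N0 : Submodule R M) (f : Fin 0 → M × Ideal R) : LfD N0 f = N0 := by
  unfold LfD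
  rw [iSup_of_empty, sup_bot_eq]

theorem N0_le_LfD (N0 : Submodule R M) {n : ℕ} (f : Fin n → M × Ideal R) :
    N0 ≤ LfD N0 f := le_sup_left

/-- Generic dependent-choice construction of staged sequences. -/
noncomputable def buildSeq {β : Type*} (Q : ∀ n : ℕ, (Fin n → β) → Prop)
    (h0 : Q 0 (fun i => i.elim0))
    (hstep : ∀ n f, Q n f → ∃ z, Q (n + 1) (Fin.snoc f z)) :
    ∀ n : ℕ, {f : Fin n → β // Q n f}
  | 0 => ⟨fun i => i.elim0, h0⟩
  | (n + 1) =>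
    ⟨Fin.snoc (buildSeq Q h0 hstep n).1 (hstep n _ (buildSeq Q h0 hstep n).2).choose,
      (hstep n _ (buildSeq Q h0 hstep n).2).choose_spec⟩

theorem buildSeq_succ {β : Type*} (Q : ∀ n : ℕ, (Fin n → β) → Prop)
    (h0 : Q 0 (fun i => i.elim0))
    (hstep : ∀ n f, Q n f → ∃ z, Q (n + 1) (Fin.snoc f z)) (n : ℕ) :
    (buildSeq Q h0 hstep (n + 1)).1 =
      Fin.snoc (buildSeq Q h0 hstep n).1 (hstep n _ (buildSeq Q h0 hstep n).2).choose := by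
  rw [buildSeq]

/-- Weakly Laskerian implies FSF. -/
theorem fsf_of_wl [IsNoetherianRing R]
    (hWL : ∀ N : Submodule R M, (associatedPrimes R (M ⧸ N)).Finite) :
    ∃ N : Submodule R M, N.FG ∧ (Module.support R (M ⧸ N)).Finite := by
  classical
  by_contra hcon
  push_neg at hcon
  have hinf : ∀ N : Submodule R M, N.FG → (Module.support R (M ⧸ N)).Infinite := by
    intro N hN
    rcases (Module.support R (M ⧸ N)).finite_or_infinite with h | h
    · exact absurd h (hcon N hN)
    · exact h
  -- `J N` is the intersection of the associated primes of `M ⧸ N`.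
  set J : Submodule R M → Ideal R := fun N => sInf (associatedPrimes R (M ⧸ N)) with hJdef
  -- Stabilization: pick `N0` f.g. maximizing `J N0`.
  have hwf : WellFounded ((· > ·) : Ideal R → Ideal R → Prop) :=
    isNoetherian_iff.mp (by infer_instance)
  obtain ⟨J0, ⟨N0, hN0fg, hJ0⟩, hJ0max⟩ := hwf.has_min
    {I : Ideal R | ∃ N : Submodule R M, N.FG ∧ I = J N} ⟨J ⊥, ⊥, Submodule.fg_bot, rfl⟩
  -- `J` is monotone on f.g. submodules above `N0`, so it is constant there.
  have hJle : ∀ N' : Submodule R M, N0 ≤ N' → J N0 ≤ J N' := by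
    intro N' hle
    refine le_sInf fun p' hp' => ?_
    obtain ⟨hp'prime, x'bar, hx'⟩ := isAP'.mp hp'
    obtain ⟨x', rfl⟩ := Submodule.Quotient.mk_surjective _ x'bar
    have hw : ∀ r : R, r • x' ∈ N0 → r ∈ p' := by
      intro r hr
      rw [hx', Submodule.mem_annihilator_span_singleton, ← Submodule.Quotient.mk_smul,
        Submodule.Quotient.mk_eq_zero]
      exact hle hr
    obtain ⟨p'', hp''mem, hp''le⟩ := exists_isAssociatedPrime_le N0 hp'prime hw
    exact le_trans (sInf_le hp''mem) hp''le
  have hJeq : ∀ N' : Submodule R M, N'.FG → N0 ≤ N' → J N' = J N0 := by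
    intro N' hfg hle
    rcases lt_or_eq_of_le (hJ0 ▸ hJle N' hle) with h | h
    · exact absurd h (by simpa [hJ0] using hJ0max (J N') ⟨N', hfg, rfl⟩)
    · exact (hJ0 ▸ h).symm
  -- Stability of the support under f.g. enlargements of `N0`.
  have hstab : ∀ N' : Submodule R M, N'.FG → N0 ≤ N' → ∀ q : Ideal R, q.IsPrime →
      (∃ x : M, ∀ r : R, r • x ∈ N0 → r ∈ q) → ∃ x : M, ∀ r : R, r • x ∈ N' → r ∈ q := by
    intro N' hfg hle q hq hw0
    obtain ⟨x0, hx0⟩ := hw0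
    obtain ⟨p0, hp0mem, hp0q⟩ := exists_isAssociatedPrime_le N0 hq hx0
    have h1 : J N' ≤ q := by
      rw [hJeq N' hfg hle]
      exact le_trans (sInf_le hp0mem) hp0q
    obtain ⟨p1', hp1'mem, hp1'q⟩ := le_of_sInf_le_prime (hWL N') hq h1
    obtain ⟨hp1'prime, xbar, hx⟩ := isAP'.mp hp1'mem
    obtain ⟨x, rfl⟩ := Submodule.Quotient.mk_surjective _ xbar
    refine ⟨x, fun r hr => hp1'q ?_⟩
    rw [hx, Submodule.mem_annihilator_span_singleton, ← Submodule.Quotient.mk_smul,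
      Submodule.Quotient.mk_eq_zero]
    exact hr
  -- Find an associated prime of `M ⧸ N0` with infinite `V(p₁)`.
  have hex : ∃ p' ∈ associatedPrimes R (M ⧸ N0),
      {q : PrimeSpectrum R | p' ≤ q.asIdeal}.Infinite := by
    by_contra hc
    push_neg at hc
    have hfin : (⋃ p' ∈ associatedPrimes R (M ⧸ N0),
        {q : PrimeSpectrum R | p' ≤ q.asIdeal}).Finite :=
      Set.Finite.biUnion (hWL N0) fun p' hp' => hc p' hp'
    refine hinf N0 hN0fg (hfin.subset ?_)
    intro q hq
    rw [mem_support_quotient_iff] at hq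
    obtain ⟨x, hx⟩ := hq
    obtain ⟨p', hp', hp'q⟩ := exists_isAssociatedPrime_le N0 q.isPrime hx
    exact Set.mem_biUnion hp' hp'q
  obtain ⟨p1, hp1mem, hp1inf⟩ := hex
  -- Choose `p` minimal among associated primes of `M ⧸ N0` below `p1`.
  obtain ⟨p, ⟨hpmem, hpp1⟩, hpmin⟩ :=
    Set.Finite.exists_minimal (s := {p' ∈ associatedPrimes R (M ⧸ N0) | p' ≤ p1}) ((hWL N0).subset (Set.sep_subset _ _)) ⟨p1, hp1mem, le_rfl⟩
  have hp : p.IsPrime := hpmem.isPrime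
  have hone : (1 : R) ∉ p := (Ideal.ne_top_iff_one p).mp hp.ne_top
  have hVinf : {q : PrimeSpectrum R | p ≤ q.asIdeal}.Infinite :=
    hp1inf.mono fun q hq => le_trans hpp1 hq
  -- `p` is minimal in the stable support.
  have hMinS : ∀ q : Ideal R, q.IsPrime → (∃ x : M, ∀ r : R, r • x ∈ N0 → r ∈ q) →
      q ≤ p → q = p := by
    intro q hq hwq hqp
    obtain ⟨x, hx⟩ := hwq
    obtain ⟨p'', hp''mem, hp''q⟩ := exists_isAssociatedPrime_le N0 hq hx
    have h1 : p = p'' := le_antisymm (hpmin ⟨hp''mem, le_trans (le_trans hp''q hqp) hpp1⟩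
      (le_trans hp''q hqp)) (le_trans hp''q hqp)
    exact le_antisymm hqp (by rw [h1]; exact hp''q)
  -- Torsion: `M ⧸ N0` is `p`-power torsion at `p`.
  have htor : ∀ x : M, ∃ s ∉ p, ∃ k : ℕ, ∀ a ∈ p ^ k, (s * a) • x ∈ N0 := by
    intro x
    by_cases hcase : ∀ r : R, r • x ∈ N0 → r ∈ p
    · have hJxle : (span R {(Submodule.Quotient.mk x : M ⧸ N0)}).annihilator ≤ p := by
        intro r hr
        rw [Submodule.mem_annihilator_span_singleton, ← Submodule.Quotient.mk_smul,
          Submodule.Quotient.mk_eq_zero] at hr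
        exact hcase r hr
      have hminp : p ∈
          ((span R {(Submodule.Quotient.mk x : M ⧸ N0)}).annihilator).minimalPrimes := by
        refine ⟨⟨hp, hJxle⟩, ?_⟩
        intro q hqpred hqp
        have hqeq : q = p := by
          refine hMinS q hqpred.1 ⟨x, fun r hr => hqpred.2 ?_⟩ hqp
          rw [Submodule.mem_annihilator_span_singleton, ← Submodule.Quotient.mk_smul,
            Submodule.Quotient.mk_eq_zero]
          exact hr
        rw [hqeq]
      obtain ⟨s, hsp, k, hk⟩ := exists_smul_pow_le _ p (IsNoetherian.noetherian p) hminp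
      refine ⟨s, hsp, k, fun a ha => ?_⟩
      have hmem := hk a ha
      rwa [Submodule.mem_annihilator_span_singleton, ← Submodule.Quotient.mk_smul,
        Submodule.Quotient.mk_eq_zero] at hmem
    · push_neg at hcase
      obtain ⟨r, hrN, hrp⟩ := hcase
      refine ⟨r, hrp, 0, fun a ha => ?_⟩
      rw [show (r * a) • x = a • (r • x) by rw [smul_smul, mul_comm]]
      exact N0.smul_mem a hrN
  -- Witness: modulo every f.g. `L ⊇ N0` there is an element with colon ideal exactly `p`.
  have hwit : ∀ L : Submodule R M, L.FG → N0 ≤ L → ∃ y : M, ∀ r : R, r • y ∈ L ↔ r ∈ p := by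
    intro L hLfg hN0L
    have hw0 : ∃ x : M, ∀ r : R, r • x ∈ N0 → r ∈ p := by
      obtain ⟨_, x0bar, hx0⟩ := isAP'.mp hpmem
      obtain ⟨x0, rfl⟩ := Submodule.Quotient.mk_surjective _ x0bar
      refine ⟨x0, fun r hr => ?_⟩
      rw [hx0, Submodule.mem_annihilator_span_singleton, ← Submodule.Quotient.mk_smul,
        Submodule.Quotient.mk_eq_zero]
      exact hr
    obtain ⟨z0, hz0⟩ := hstab L hLfg hN0L p hp hw0
    obtain ⟨s, hsp, k, hk⟩ := htor z0
    have hz1 : ∀ r : R, r • (s • z0) ∈ L → r ∈ p := by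
      intro r hr
      rw [smul_smul] at hr
      rcases hp.mem_or_mem (hz0 (r * s) hr) with h | h
      exacts [h, absurd h hsp]
    have hz2 : ∀ a ∈ p ^ k, a • (s • z0) ∈ L := by
      intro a ha
      rw [smul_smul, mul_comm]
      exact hN0L (hk a ha)
    have hzbar : ∀ t ∉ p, t • (Submodule.Quotient.mk (s • z0) : M ⧸ L) ≠ 0 := by
      intro t ht h0
      rw [← Submodule.Quotient.mk_smul, Submodule.Quotient.mk_eq_zero] at h0
      exact ht (hz1 t h0)
    have hzk : ∀ a ∈ p ^ k, ∃ t ∉ p, t • a • (Submodule.Quotient.mk (s • z0) : M ⧸ L) = 0 := by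
      intro a ha
      refine ⟨1, hone, ?_⟩
      rw [one_smul, ← Submodule.Quotient.mk_smul, Submodule.Quotient.mk_eq_zero]
      exact hz2 a ha
    obtain ⟨c, hc1, hc2⟩ := exists_socle_elt p hp (IsNoetherian.noetherian p) k
      (Submodule.Quotient.mk (s • z0)) hzbar hzk
    refine ⟨c • s • z0, fun r => ⟨fun hr => ?_, fun hr => ?_⟩⟩
    · by_contra hrp
      refine hc1 r hrp ?_
      rw [← Submodule.Quotient.mk_smul, ← Submodule.Quotient.mk_smul,
        Submodule.Quotient.mk_eq_zero]
      exact hr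
    · have h2 := hc2 r hr
      rw [← Submodule.Quotient.mk_smul, ← Submodule.Quotient.mk_smul,
        Submodule.Quotient.mk_eq_zero] at h2
      exact h2
  have hP0 : PD N0 p 0 (fun i => i.elim0) := by
    refine ⟨by rw [LfD_zero]; exact hN0fg, fun i => i.elim0, fun i => i.elim0,
      fun i => i.elim0, fun i => i.elim0⟩
  have hstep : ∀ (n : ℕ) (f : Fin n → M × Ideal R), PD N0 p n f →
      ∃ z : M × Ideal R, PD N0 p (n + 1) (Fin.snoc f z) := by
    intro n f hPf
    obtain ⟨hLfg, hPr, hPlt, hPinj, hPcol⟩ := hPf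
    obtain ⟨y, hy⟩ := hwit (LfD N0 f) hLfg (N0_le_LfD N0 f)
    have hBfin : (({p} ∪ Set.range fun i : Fin n => (f i).2 : Set (Ideal R))).Finite :=
      (Set.finite_singleton p).union (Set.finite_range _)
    have hpre : ((fun q : PrimeSpectrum R => q.asIdeal) ⁻¹'
        ({p} ∪ Set.range fun i : Fin n => (f i).2)).Finite := by
      refine Set.Finite.preimage ?_ hBfin
      intro a _ b _ hab
      exact PrimeSpectrum.ext hab
    obtain ⟨qpt, hqmem⟩ := (hVinf.diff hpre).nonempty
    obtain ⟨hq1, hq2⟩ := hqmem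
    have hq1 : p ≤ qpt.asIdeal := hq1
    have hqprime : qpt.asIdeal.IsPrime := qpt.isPrime
    have hpq : p < qpt.asIdeal :=
      lt_of_le_of_ne hq1 fun h => hq2 (Set.mem_union_left _ (Set.mem_singleton_iff.mpr h.symm))
    have hqnotold : ∀ i : Fin n, qpt.asIdeal ≠ (f i).2 :=
      fun i h => hq2 (Set.mem_union_right _ ⟨i, h.symm⟩)
    refine ⟨(y, qpt.asIdeal), ?_, ?_, ?_, ?_, ?_⟩
    · rw [LfD_snoc]
      exact hLfg.sup (fg_smul_span_singleton _ (IsNoetherian.noetherian _) y)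
    · intro i
      induction i using Fin.lastCases with
      | last => simpa using hqprime
      | cast j => simpa using hPr j
    · intro i
      induction i using Fin.lastCases with
      | last => simpa using hpq
      | cast j => simpa using hPlt j
    · intro i j hij
      induction i using Fin.lastCases with
      | last =>
        induction j using Fin.lastCases with
        | last => rfl
        | cast j' =>
          simp only [Fin.snoc_last, Fin.snoc_castSucc] at hij
          exact absurd hij (hqnotold j')
      | cast i' =>
        induction j using Fin.lastCases with
        | last =>
          simp only [Fin.snoc_last, Fin.snoc_castSucc] at hij
          exact absurd hij.symm (hqnotold i')
        | cast j' =>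
          simp only [Fin.snoc_castSucc] at hij
          rw [hPinj hij]
    · intro i r
      rw [LfD_snoc]
      induction i using Fin.lastCases with
      | last =>
        simp only [Fin.snoc_last]
        constructor
        · intro hr
          obtain ⟨l, hl, w, hw, heq⟩ := Submodule.mem_sup.mp hr
          obtain ⟨a, haq, rfl⟩ := Submodule.mem_smul_span_singleton.mp hw
          have hla : (r - a) • y = l := by
            rw [sub_smul, ← heq, add_sub_cancel_right]
          have hra : r - a ∈ p := (hy (r - a)).mp (hla ▸ hl)
          have : r = (r - a) + a := by ring
          rw [this]
          exact Ideal.add_mem _ (hpq.le hra) haq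
        · intro hr
          exact Submodule.mem_sup_right
            (Submodule.smul_mem_smul hr (Submodule.mem_span_singleton_self y))
      | cast i' =>
        simp only [Fin.snoc_castSucc]
        constructor
        · intro hr
          obtain ⟨l, hl, w, hw, heq⟩ := Submodule.mem_sup.mp hr
          obtain ⟨a, haq, rfl⟩ := Submodule.mem_smul_span_singleton.mp hw
          obtain ⟨u, huq, hup⟩ := SetLike.exists_of_lt (hPlt i')
          have h1 : u • (r • (f i').1) ∈ LfD N0 f := by
            rw [smul_smul, mul_comm, ← smul_smul]
            exact (LfD N0 f).smul_mem r ((hPcol i' u).mpr huq)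
          have h2 : (u * a) • y ∈ LfD N0 f := by
            have heq2 : (u * a) • y = u • (r • (f i').1) - u • l := by
              rw [← heq, smul_add, smul_smul]
              abel
            rw [heq2]
            exact Submodule.sub_mem _ h1 ((LfD N0 f).smul_mem u hl)
          have h3 : u * a ∈ p := (hy (u * a)).mp h2
          have h4 : a ∈ p := by
            rcases hp.mem_or_mem h3 with h | h
            exacts [absurd h hup, h]
          have h5 : a • y ∈ LfD N0 f := (hy a).mpr h4
          have h6 : r • (f i').1 ∈ LfD N0 f := by
            rw [← heq]
            exact Submodule.add_mem _ hl h5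
          exact (hPcol i' r).mp h6
        · intro hr
          exact Submodule.mem_sup_left ((hPcol i' r).mpr hr)
  -- Build the sequence of stages.
  set build : ∀ n : ℕ, {f : Fin n → M × Ideal R // PD N0 p n f} :=
    buildSeq (PD N0 p) hP0 hstep with hbuild
  have hbuild_succ : ∀ n : ℕ,
      (build (n + 1)).1 = Fin.snoc (build n).1 (hstep n (build n).1 (build n).2).choose :=
    fun n => buildSeq_succ (PD N0 p) hP0 hstep n
  set g : ℕ → M × Ideal R := fun n => (build (n + 1)).1 (Fin.last n) with hg
  have hagree : ∀ (n : ℕ) (i : Fin n), (build n).1 i = g i.1 := by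
    intro n
    induction n with
    | zero => exact fun i => i.elim0
    | succ n ih =>
      intro i
      induction i using Fin.lastCases with
      | last =>
        show (build (n + 1)).1 (Fin.last n) = g ((Fin.last n) : ℕ)
        have : ((Fin.last n : Fin (n + 1)) : ℕ) = n := rfl
        rw [this]
      | cast j =>
        rw [hbuild_succ n, Fin.snoc_castSucc]
        exact ih j
  have hLmono : ∀ n : ℕ, LfD N0 (build n).1 ≤ LfD N0 (build (n + 1)).1 := by
    intro n
    rw [hbuild_succ n, LfD_snoc]
    exact le_sup_left
  set ach : ℕ →o Submodule R M := ⟨fun n => LfD N0 (build n).1, monotone_nat_of_le_succ hLmono⟩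
    with hach
  set Lω : Submodule R M := ⨆ n, ach n with hLω
  have hLb : ∀ n : ℕ, ach n ≤ Lω := fun n => le_iSup (fun n => ach n) n
  have hQass : ∀ j : ℕ, IsAssociatedPrime (g j).2 (M ⧸ Lω) := by
    intro j
    have hprimej : (g j).2.IsPrime := by
      have h := (build (j + 1)).2.2.1 (Fin.last j)
      rwa [hagree (j + 1) (Fin.last j)] at h
    refine isAP'.mpr ⟨hprimej, Submodule.Quotient.mk (g j).1, ?_⟩
    ext r
    rw [Submodule.mem_annihilator_span_singleton, ← Submodule.Quotient.mk_smul,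
      Submodule.Quotient.mk_eq_zero]
    constructor
    · intro hr
      have hcol := (build (j + 1)).2.2.2.2.2 (Fin.last j) r
      rw [hagree (j + 1) (Fin.last j)] at hcol
      exact hLb (j + 1) (hcol.mpr hr)
    · intro hr
      rw [hLω] at hr
      obtain ⟨m0, hm0⟩ := (Submodule.mem_iSup_of_chain ach _).mp hr
      have hm : r • (g j).1 ∈ ach (max m0 (j + 1)) :=
        ach.monotone (le_max_left m0 (j + 1)) hm0
      have hjm : j < max m0 (j + 1) := lt_of_lt_of_le (Nat.lt_succ_self j) (le_max_right _ _)
      have hcol := (build (max m0 (j + 1))).2.2.2.2.2 ⟨j, hjm⟩ r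
      rw [hagree (max m0 (j + 1)) ⟨j, hjm⟩] at hcol
      exact hcol.mp hm
  have hQinj : Function.Injective fun j : ℕ => (g j).2 := by
    intro i j hij
    simp only at hij
    have him : i < max i j + 1 := Nat.lt_succ_of_le (le_max_left i j)
    have hjm : j < max i j + 1 := Nat.lt_succ_of_le (le_max_right i j)
    have hinj := (build (max i j + 1)).2.2.2.2.1
    have h2 : (⟨i, him⟩ : Fin (max i j + 1)) = ⟨j, hjm⟩ := by
      apply hinj
      show ((build (max i j + 1)).1 ⟨i, him⟩).2 = ((build (max i j + 1)).1 ⟨j, hjm⟩).2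
      rw [hagree (max i j + 1) ⟨i, him⟩, hagree (max i j + 1) ⟨j, hjm⟩]
      exact hij
    exact congrArg Fin.val h2
  exact Set.infinite_of_injective_forall_mem hQinj (fun j => hQass j) (hWL Lω)

end WLFSF

/-- A nonzero module over a Noetherian ring is weakly Laskerian (every quotient has
finitely many associated primes) iff it is FSF (it has a finitely generated submodule
with finite-support quotient). -/
theorem weaklyLaskerian_iff_fsf (R : Type) [CommRing R] [IsNoetherianRing R]
    (M : Type) [AddCommGroup M] [Module R M] [Nontrivial M] :
    (∀ N : Submodule R M, (associatedPrimes R (M ⧸ N)).Finite) ↔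
      (∃ N : Submodule R M, N.FG ∧ (Module.support R (M ⧸ N)).Finite) := by
  constructor
  · exact fun h => WLFSF.fsf_of_wl h
  · rintro ⟨N, hfg, hfin⟩ K
    exact WLFSF.wl_of_fsf N hfg hfin K
end
end

section
/- Let R be a Noetherian commutative ring and n ≥ -1 an integer. The class of FD_{≤ n} R-modules is a Serre subcategory of the category of R-modules: it is closed under taking submodules, quotient modules, and extensions. Precisely: (a) any submodule and any quotient of an FD_{≤ n} module is FD_{≤ n}; (b) if 0 → A → B → C → 0 is a short exact sequence of R-modules with A and C both FD_{≤ n}, then B is FD_{≤ n}. -/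
open CategoryTheory Opposite

noncomputable section

section Aux

/-- Krull dimension of a subset bounded by that of a union of two upward closed sets. -/
lemma krullDim_le_max_of_subset_union {α : Type*} [Preorder α] {s t u : Set α}
    (hu : u ⊆ s ∪ t)
    (hs : ∀ ⦃a b : α⦄, a ≤ b → a ∈ s → b ∈ s)
    (ht : ∀ ⦃a b : α⦄, a ≤ b → a ∈ t → b ∈ t) :
    Order.krullDim u ≤ max (Order.krullDim s) (Order.krullDim t) := by
  refine iSup_le fun p => ?_
  rcases hu p.head.2 with h | h
  · refine le_trans ?_ (le_max_left _ _)
    let q : LTSeries s :=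
      ⟨p.length, fun i => ⟨(p i : α),
        hs (Subtype.coe_le_coe.mpr (p.monotone (Fin.zero_le i))) h⟩,
        fun i => by change _ < _; exact Subtype.mk_lt_mk.mpr (Subtype.coe_lt_coe.mpr (p.step i))⟩
    exact Order.LTSeries.length_le_krullDim q
  · refine le_trans ?_ (le_max_right _ _)
    let q : LTSeries t :=
      ⟨p.length, fun i => ⟨(p i : α),
        ht (Subtype.coe_le_coe.mpr (p.monotone (Fin.zero_le i))) h⟩,
        fun i => by change _ < _; exact Subtype.mk_lt_mk.mpr (Subtype.coe_lt_coe.mpr (p.step i))⟩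
    exact Order.LTSeries.length_le_krullDim q

variable {R : Type} [CommRing R]

/-- The support of a module is upward closed in the prime spectrum. -/
lemma support_upward_closed (M : Type) [AddCommGroup M] [Module R M]
    ⦃p q : PrimeSpectrum R⦄ (hpq : p ≤ q) (hp : p ∈ Module.support R M) :
    q ∈ Module.support R M := by
  rw [Module.mem_support_iff_exists_annihilator] at hp ⊢
  obtain ⟨m, hm⟩ := hp
  exact ⟨m, hm.trans hpq⟩

lemma supportDimLE_of_subset {M M' : Type} [AddCommGroup M] [Module R M]
    [AddCommGroup M'] [Module R M'] {n : ℤ}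
    (h : Module.support R M' ⊆ Module.support R M)
    (hM : Module.supportDimLE R M n) : Module.supportDimLE R M' n := by
  refine le_trans ?_ hM
  exact Order.krullDim_le_of_strictMono (Set.inclusion h)
    (fun a b hab => Subtype.mk_lt_mk.mpr (Subtype.coe_lt_coe.mpr hab))

lemma supportDimLE_of_subset_union {M A C : Type} [AddCommGroup M] [Module R M]
    [AddCommGroup A] [Module R A] [AddCommGroup C] [Module R C] {n : ℤ}
    (h : Module.support R M ⊆ Module.support R A ∪ Module.support R C)
    (hA : Module.supportDimLE R A n) (hC : Module.supportDimLE R C n) :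
    Module.supportDimLE R M n := by
  refine le_trans (krullDim_le_max_of_subset_union h
    (support_upward_closed A) (support_upward_closed C)) ?_
  exact max_le hA hC

/-- Over a Noetherian ring, a submodule of a finitely generated submodule is
finitely generated. -/
lemma fg_of_le_fg [IsNoetherianRing R] {M : Type} [AddCommGroup M] [Module R M]
    {P Q : Submodule R M} (hPQ : P ≤ Q) (hQ : Q.FG) : P.FG := by
  have : IsNoetherian R Q := isNoetherian_of_fg_of_noetherian Q hQ
  have h1 : (P.comap Q.subtype).FG := IsNoetherian.noetherian _
  have h2 := h1.map Q.subtype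
  rwa [Submodule.map_comap_subtype, inf_eq_right.mpr hPQ] at h2

end Aux

/-- The class of `FD_{≤ n}` modules is a Serre subcategory: it is closed under
submodules, quotients, and extensions. -/
theorem isFD_serre (R : Type) [CommRing R] [IsNoetherianRing R] (n : ℤ) (hn : -1 ≤ n) :
    (∀ (M : Type) [AddCommGroup M] [Module R M] (N : Submodule R M),
      Module.IsFD R M n → Module.IsFD R N n ∧ Module.IsFD R (M ⧸ N) n) ∧
    (∀ (A B C : Type) [AddCommGroup A] [Module R A] [AddCommGroup B] [Module R B]
      [AddCommGroup C] [Module R C] (f : A →ₗ[R] B) (g : B →ₗ[R] C),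
      Function.Injective f → Function.Surjective g → Function.Exact f g →
      Module.IsFD R A n → Module.IsFD R C n → Module.IsFD R B n) := by
  constructor
  · intro M _ _ N hM
    obtain ⟨K, hKfg, hKdim⟩ := hM
    constructor
    · -- submodule
      refine ⟨K.comap N.subtype, ?_, ?_⟩
      · apply Submodule.fg_of_fg_map_injective N.subtype N.injective_subtype
        rw [Submodule.map_comap_subtype]
        exact fg_of_le_fg inf_le_right hKfg
      · have hker : LinearMap.ker (K.mkQ.comp N.subtype) = K.comap N.subtype := by
          rw [LinearMap.ker_comp, Submodule.ker_mkQ]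
        refine supportDimLE_of_subset (Module.support_subset_of_injective
          ((K.comap N.subtype).liftQ (K.mkQ.comp N.subtype) hker.ge) ?_) hKdim
        rw [← LinearMap.ker_eq_bot]
        exact Submodule.ker_liftQ_eq_bot' _ _ hker.symm
    · -- quotient
      refine ⟨K.map N.mkQ, hKfg.map _, ?_⟩
      have hle : K ≤ LinearMap.ker ((K.map N.mkQ).mkQ.comp N.mkQ) := by
        intro x hx
        have hmem : N.mkQ x ∈ K.map N.mkQ := Submodule.mem_map_of_mem hx
        simp only [LinearMap.mem_ker, LinearMap.comp_apply, ← Submodule.mem_comap,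
          ← Submodule.ker_mkQ (K.map N.mkQ)] at *
        exact hmem
      refine supportDimLE_of_subset (Module.support_subset_of_surjective
        (K.liftQ ((K.map N.mkQ).mkQ.comp N.mkQ) hle) ?_) hKdim
      intro y
      obtain ⟨x, rfl⟩ := ((K.map N.mkQ).mkQ_surjective.comp N.mkQ_surjective) y
      exact ⟨K.mkQ x, by simp [Submodule.liftQ_apply]⟩
  · intro A B C _ _ _ _ _ _ f g hf hg hfg hA hC
    obtain ⟨KA, hKAfg, hKAdim⟩ := hA
    obtain ⟨KC, hKCfg, hKCdim⟩ := hC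
    obtain ⟨s, hs⟩ := hKCfg
    set l : C → B := Function.surjInv hg with hl
    set T : Submodule R B := Submodule.span R (l '' ↑s) with hT
    set KB : Submodule R B := KA.map f ⊔ T with hKB
    have hTfg : T.FG := Submodule.fg_span ((s.finite_toSet).image l)
    have hKBfg : KB.FG := (hKAfg.map f).sup hTfg
    have hgl : ∀ c : C, g (l c) = c := fun c => Function.surjInv_eq hg c
    have hmapT : T.map g = KC := by
      rw [hT, Submodule.map_span, ← hs, Set.image_image]
      simp [hgl]
    have hkerg : LinearMap.ker g = LinearMap.range f := LinearMap.exact_iff.mp hfg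
    have hcomap : KC.comap g = LinearMap.range f ⊔ KB := by
      apply le_antisymm
      · intro b hb
        rw [Submodule.mem_comap, ← hmapT] at hb
        obtain ⟨t, ht, hgt⟩ := hb
        have hbt : b - t ∈ LinearMap.range f := by
          rw [← hkerg, LinearMap.mem_ker, map_sub, hgt, sub_self]
        rw [show b = (b - t) + t from (sub_add_cancel b t).symm]
        exact Submodule.add_mem _ (Submodule.mem_sup_left hbt)
          (Submodule.mem_sup_right ((le_sup_right : T ≤ KB) ht))
      · have h1 : LinearMap.range f ≤ KC.comap g := by
          rintro b ⟨a, rfl⟩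
          simp only [Submodule.mem_comap, hfg.apply_apply_eq_zero a]
          exact KC.zero_mem
        refine sup_le h1 (sup_le (le_trans LinearMap.map_le_range h1) ?_)
        rw [hT, Submodule.span_le]
        rintro b ⟨c, hc, rfl⟩
        simp only [Set.mem_preimage, SetLike.mem_coe, Submodule.mem_comap, hgl c]
        exact hs ▸ Submodule.subset_span hc
    have hleB : KB ≤ KC.comap g := hcomap ▸ le_sup_right
    set gbar := KB.mapQ KC g hleB with hgbar
    have hgbarsurj : Function.Surjective gbar := by
      intro y
      obtain ⟨c, rfl⟩ := KC.mkQ_surjective y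
      obtain ⟨b, rfl⟩ := hg c
      exact ⟨KB.mkQ b, by rw [hgbar]; simp [Submodule.mapQ_apply]⟩
    have hθle : KA ≤ LinearMap.ker (KB.mkQ.comp f) := by
      intro a ha
      have hmem : f a ∈ KB := (le_sup_left : KA.map f ≤ KB) (Submodule.mem_map_of_mem ha)
      simp only [LinearMap.mem_ker, LinearMap.comp_apply, ← Submodule.mem_comap,
        ← Submodule.ker_mkQ KB] at *
      exact hmem
    set θ := KA.liftQ (KB.mkQ.comp f) hθle with hθ
    have hmapKB : KB.map KB.mkQ = ⊥ := by
      rw [eq_bot_iff]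
      rintro x ⟨b, hb, rfl⟩
      simpa [Submodule.mem_bot, Submodule.Quotient.mk_eq_zero] using hb
    have hrange : LinearMap.range θ = LinearMap.ker gbar := by
      have h1 : LinearMap.ker gbar =
          (LinearMap.ker (KC.mkQ.comp g)).map KB.mkQ := Submodule.ker_liftQ _ _ _
      rw [hθ, Submodule.range_liftQ, LinearMap.range_comp, h1, LinearMap.ker_comp,
        Submodule.ker_mkQ, hcomap, Submodule.map_sup, hmapKB, sup_bot_eq]
    have hexact : Function.Exact (LinearMap.ker gbar).subtype gbar :=
      LinearMap.exact_subtype_ker_map gbar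
    have hsupp : Module.support R (B ⧸ KB) =
        Module.support R (LinearMap.ker gbar) ∪ Module.support R (C ⧸ KC) :=
      Module.support_of_exact hexact (Submodule.injective_subtype _) hgbarsurj
    have hsub : Module.support R (LinearMap.ker gbar) ⊆ Module.support R (A ⧸ KA) := by
      rw [← hrange]
      exact Module.support_subset_of_surjective _ θ.surjective_rangeRestrict
    refine ⟨KB, hKBfg, supportDimLE_of_subset_union ?_ hKAdim hKCdim⟩
    rw [hsupp]
    exact Set.union_subset_union_left _ hsub
end
end
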